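/- arXiv:2604.00226 — 2 statements merged into one kernel-verified Lean document; each statement's English description precedes it below -/
import Mathlib

section
/- Let ζ : ℝ → ℝ be continuous, bounded, nonnegative with ∫_ℝ ζ(x) dx = 1 and ∫_ℝ ζ(x)|x| dx < ∞. With Δ₁ := max{∫_ℝ σ ζ(σ) dσ, 0} and Δ₂ := ∫_{−∞}^{0} |σ| ζ(σ) dσ, the smoothed positive part satisfies −δ Δ₁ ≤ (x)_{+,δ} − (x)_+ ≤ δ Δ₂ for all x ∈ ℝ and all δ > 0. -/
open MeasureTheory

noncomputable def Acdf (ζ : ℝ → ℝ) (δ τ : ℝ) : ℝ :=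
  ∫ σ in Set.Iic τ, (1 / δ) * ζ (σ / δ)

noncomputable def smoothPos (ζ : ℝ → ℝ) (δ x : ℝ) : ℝ :=
  ∫ τ in Set.Iic x, Acdf ζ δ τ

/-! Interchanging the two integrations (Fubini, justified by the first moment of `ζ`) and
rescaling give `(x)_{+,δ} = ∫ ζ(u) (x - δu)₊ du`. Both bounds are then pointwise: from below,
`(x - δu)₊ ≥ x - δu` together with `(x)_{+,δ} ≥ 0`; from above,
`(x - δu)₊ ≤ (x)₊ + δ (-u)₊`, and `∫ ζ = 1`. -/

open Set Filter

lemma setIntegral_Iic_indicator_Ici_const (y σ c : ℝ) :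
    ∫ u in Iic y, (Ici σ).indicator (fun _ => c) u = c * max 0 (y - σ) := by
  rw [setIntegral_indicator measurableSet_Ici, setIntegral_const, inter_comm,
    Ici_inter_Iic, Real.volume_real_Icc, smul_eq_mul, mul_comm, max_comm]

lemma posPart_sub_mul_le_abs_add (a b σ : ℝ) : max 0 (a - b * σ) ≤ |a| + |b| * |σ| := by
  refine max_le (by positivity) ?_
  calc a - b * σ ≤ |a - b * σ| := le_abs_self _
    _ ≤ |a| + |b * σ| := abs_sub _ _
    _ = |a| + |b| * |σ| := by rw [abs_mul]

lemma MeasureTheory.Integrable.mul_posPart_sub_mul {g : ℝ → ℝ} (hg : Integrable g)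
    (hg₁ : Integrable fun σ => g σ * |σ|) (a b : ℝ) :
    Integrable fun σ => g σ * max 0 (a - b * σ) := by
  have hcont : Continuous fun σ : ℝ => max 0 (a - b * σ) := by fun_prop
  refine ((hg.norm.mul_const |a|).add (hg₁.norm.const_mul |b|)).mono'
    (hg.aestronglyMeasurable.mul hcont.aestronglyMeasurable) (Eventually.of_forall fun σ => ?_)
  simp only [Pi.add_apply, norm_mul, Real.norm_eq_abs, abs_abs,
    abs_of_nonneg (le_max_left 0 (a - b * σ))]
  nlinarith [posPart_sub_mul_le_abs_add a b σ, abs_nonneg (g σ)]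

lemma setIntegral_Iic_setIntegral_Iic {g : ℝ → ℝ} (hg : Integrable g)
    (hg₁ : Integrable fun σ => g σ * |σ|) (y : ℝ) :
    ∫ u in Iic y, ∫ s in Iic u, g s = ∫ σ, g σ * max 0 (y - σ) := by
  set f : ℝ → ℝ → ℝ := fun σ u => (Ici σ).indicator (fun _ => g σ) u
  have hmeas : AEStronglyMeasurable (Function.uncurry f) (volume.prod (volume.restrict (Iic y))) :=
    (hg.aestronglyMeasurable.comp_fst).indicator (s := {p : ℝ × ℝ | p.1 ≤ p.2})
      (measurableSet_le measurable_fst measurable_snd)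
  have hg₁' : Integrable fun σ => ‖g σ‖ * |σ| := by
    simpa only [norm_mul, norm_abs_eq_norm, Real.norm_eq_abs] using hg₁.norm
  have hint : Integrable (Function.uncurry f) (volume.prod (volume.restrict (Iic y))) := by
    refine (integrable_prod_iff hmeas).mpr ⟨Eventually.of_forall fun σ => ?_, ?_⟩
    · change Integrable ((Ici σ).indicator fun _ => g σ) _
      refine (integrable_indicator_iff measurableSet_Ici).mpr (integrableOn_const ?_ enorm_ne_top)
      rw [Measure.restrict_apply measurableSet_Ici, Ici_inter_Iic, Real.volume_Icc]
      exact ENNReal.ofReal_ne_top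
    · simpa only [Function.uncurry, f, norm_indicator_eq_indicator_norm,
        setIntegral_Iic_indicator_Ici_const, one_mul] using
        hg.norm.mul_posPart_sub_mul hg₁' y 1
  calc ∫ u in Iic y, ∫ s in Iic u, g s = ∫ u in Iic y, ∫ σ, f σ u := by
        simp only [f, ← integral_indicator measurableSet_Iic]; rfl
    _ = ∫ σ, ∫ u in Iic y, f σ u := (integral_integral_swap hint).symm
    _ = ∫ σ, g σ * max 0 (y - σ) := by simp only [f, setIntegral_Iic_indicator_Ici_const]

section

variable {ζ : ℝ → ℝ} {δ : ℝ}

lemma smoothPos_eq_integral_mul_posPart (hζ : Integrable ζ)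
    (hmom : Integrable fun x => ζ x * |x|) (hδ : 0 < δ) (x : ℝ) :
    smoothPos ζ δ x = ∫ u, ζ u * max 0 (x - δ * u) := by
  have hδ₀ : δ ≠ 0 := hδ.ne'
  have hg₁ : Integrable fun σ => 1 / δ * ζ (σ / δ) * |σ| := by
    refine (hmom.comp_div hδ₀).congr (Eventually.of_forall fun σ => ?_)
    simp only [abs_div, abs_of_pos hδ]
    field_simp
  have hscale : ∀ σ, 1 / δ * ζ (σ / δ) * max 0 (x - σ) =
      δ⁻¹ * (ζ (σ / δ) * max 0 (x - δ * (σ / δ))) := fun σ => by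
    rw [mul_div_cancel₀ _ hδ₀]; ring
  unfold smoothPos Acdf
  rw [setIntegral_Iic_setIntegral_Iic
      ((hζ.comp_div hδ₀).const_mul _) hg₁, funext hscale,
    Measure.integral_comp_div (fun u => δ⁻¹ * (ζ u * max 0 (x - δ * u))), integral_const_mul,
    smul_eq_mul, abs_of_pos hδ, mul_inv_cancel_left₀ hδ₀]

lemma smoothPos_nonneg (hnn : ∀ x, 0 ≤ ζ x) (hδ : 0 ≤ δ) (x : ℝ) :
    0 ≤ smoothPos ζ δ x :=
  integral_nonneg fun _ => integral_nonneg fun σ => mul_nonneg (by positivity) (hnn _)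

variable (hnn : ∀ x, 0 ≤ ζ x) (hζ : Integrable ζ) (hone : ∫ x, ζ x = 1)
  (hmom : Integrable fun x => ζ x * |x|) (hδ : 0 < δ) (x : ℝ)
include hnn hζ hone hmom hδ

lemma sub_mul_integral_le_smoothPos :
    x - δ * ∫ σ, σ * ζ σ ≤ smoothPos ζ δ x := by
  have hmom' : Integrable fun σ => σ * ζ σ :=
    hmom.mono (aestronglyMeasurable_id.mul hζ.1)
      (Eventually.of_forall fun σ => by
        simp only [norm_mul, Real.norm_eq_abs, abs_abs, mul_comm, le_refl])
  calc x - δ * ∫ σ, σ * ζ σ = ∫ u, (x * ζ u - δ * (u * ζ u)) := by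
        rw [integral_sub (hζ.const_mul x) (hmom'.const_mul δ), integral_const_mul,
          integral_const_mul, hone, mul_one]
    _ ≤ ∫ u, ζ u * max 0 (x - δ * u) :=
        integral_mono ((hζ.const_mul x).sub (hmom'.const_mul δ))
          (hζ.mul_posPart_sub_mul hmom x δ) fun u => by
            nlinarith [hnn u, le_max_right 0 (x - δ * u)]
    _ = smoothPos ζ δ x := (smoothPos_eq_integral_mul_posPart hζ hmom hδ x).symm

lemma smoothPos_le : smoothPos ζ δ x ≤ max 0 x + δ * ∫ σ in Iic 0, |σ| * ζ σ := by
  have hneg : Integrable fun σ => |σ| * ζ σ := by simpa only [mul_comm] using hmom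
  have hpointwise : ∀ u, ζ u * max 0 (x - δ * u) ≤
      ζ u * max 0 x + δ * (Iic 0).indicator (fun σ => |σ| * ζ σ) u := by
    intro u
    rcases le_or_gt u 0 with hu | hu
    · have hle : max 0 (x - δ * u) ≤ max 0 x - δ * u :=
        max_le (by nlinarith [le_max_left 0 x]) (by linarith [le_max_right 0 x])
      rw [indicator_of_mem (mem_Iic.mpr hu), abs_of_nonpos hu]
      nlinarith [mul_le_mul_of_nonneg_left hle (hnn u)]
    · have hle : max 0 (x - δ * u) ≤ max 0 x := max_le_max_left 0 (by nlinarith)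
      rw [indicator_of_notMem (by simpa using hu), mul_zero, add_zero]
      exact mul_le_mul_of_nonneg_left hle (hnn u)
  calc smoothPos ζ δ x = ∫ u, ζ u * max 0 (x - δ * u) :=
        smoothPos_eq_integral_mul_posPart hζ hmom hδ x
    _ ≤ ∫ u, (ζ u * max 0 x + δ * (Iic 0).indicator (fun σ => |σ| * ζ σ) u) :=
        integral_mono (hζ.mul_posPart_sub_mul hmom x δ)
          ((hζ.mul_const _).add ((hneg.indicator measurableSet_Iic).const_mul δ)) hpointwise
    _ = max 0 x + δ * ∫ σ in Iic 0, |σ| * ζ σ := by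
        rw [integral_add (hζ.mul_const _) ((hneg.indicator measurableSet_Iic).const_mul δ),
          integral_mul_const, integral_const_mul, hone, one_mul,
          integral_indicator measurableSet_Iic]

end

theorem smoothPos_sub_posPart_bounds_general (ζ : ℝ → ℝ) (hnn : ∀ x, 0 ≤ ζ x)
    (hone : (∫ x, ζ x) = 1)
    (hmom : Integrable (fun x => ζ x * |x|)) (δ : ℝ) (hδ : 0 < δ) (x : ℝ) :
    -δ * max (∫ σ, σ * ζ σ) 0 ≤ smoothPos ζ δ x - max 0 x ∧
      smoothPos ζ δ x - max 0 x ≤ δ * ∫ σ in Set.Iic (0 : ℝ), |σ| * ζ σ := by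
  have hζ : Integrable ζ := .of_integral_ne_zero (by simp [hone])
  have hlower := sub_mul_integral_le_smoothPos hnn hζ hone hmom hδ x
  have hupper := smoothPos_le hnn hζ hone hmom hδ x
  have hmean : δ * ∫ σ, σ * ζ σ ≤ δ * max (∫ σ, σ * ζ σ) 0 :=
    mul_le_mul_of_nonneg_left (le_max_left _ _) hδ.le
  have hΔ₁ : 0 ≤ δ * max (∫ σ, σ * ζ σ) 0 := mul_nonneg hδ.le (le_max_right _ _)
  refine ⟨?_, by linarith⟩
  rw [neg_mul, neg_le_sub_iff_le_add]
  exact max_le (by linarith [smoothPos_nonneg hnn hδ.le x]) (by linarith)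

/-- Two-sided bound `−δΔ₁ ≤ (x)_{+,δ} − (x)₊ ≤ δΔ₂` with
`Δ₁ = max{∫ σ ζ(σ) dσ, 0}` and `Δ₂ = ∫_{-∞}^0 |σ| ζ(σ) dσ`. -/
theorem smoothPos_sub_posPart_bounds (ζ : ℝ → ℝ) (hc : Continuous ζ)
    (hb : ∃ M, ∀ x, ζ x ≤ M) (hnn : ∀ x, 0 ≤ ζ x)
    (hone : (∫ x, ζ x) = 1)
    (hmom : Integrable (fun x => ζ x * |x|)) (δ : ℝ) (hδ : 0 < δ) (x : ℝ) :
    -δ * max (∫ σ, σ * ζ σ) 0 ≤ smoothPos ζ δ x - max 0 x ∧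
      smoothPos ζ δ x - max 0 x ≤ δ * ∫ σ in Set.Iic (0 : ℝ), |σ| * ζ σ :=
  smoothPos_sub_posPart_bounds_general ζ hnn hone hmom δ hδ x
end

section
/- Assume ζ : ℝ → ℝ is continuous, bounded, nonnegative with ∫ ζ = 1, ∫ ζ(x)|x| dx < ∞, and that either ∫_ℝ ζ(x)x dx ≤ 0 or ∫_{−∞}^{0} ζ(x)|x| dx = 0. Then for each fixed δ > 0, either (x)_{+,δ} ≤ (x)_+ for all x ∈ ℝ, or (x)_+ ≤ (x)_{+,δ} for all x ∈ ℝ. -/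
/-! With `f σ = δ⁻¹ ζ(σ/δ)`, Fubini turns `smoothPos ζ δ x` into `∫ (x - σ)₊ f(σ) dσ`, the mean
of `(x - S)₊` for a random variable `S` with density `f`. If `𝔼 S ≤ 0`, integrating
`(x - S)₊ ≥ x - S` and `(x - S)₊ ≥ 0` gives the lower bound `x₊`. If instead
`∫_{-∞}^0 ζ(u)|u| du = 0`, the continuous `ζ` vanishes on `(-∞, 0)`, so `S ≥ 0` and
`(x - S)₊ ≤ x₊` pointwise. -/

open MeasureTheory

open Set

lemma integral_Iic_indicator_Ici_const (x σ c : ℝ) :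
    ∫ τ in Iic x, (Ici σ).indicator (fun _ => c) τ = max 0 (x - σ) * c := by
  rw [integral_indicator measurableSet_Ici, setIntegral_const, smul_eq_mul, measureReal_def,
    Measure.restrict_apply measurableSet_Ici, Ici_inter_Iic, Real.volume_Icc,
    ENNReal.toReal_ofReal', max_comm]

section FirstMoment

variable {f : ℝ → ℝ} (hf : Integrable f) (hmom : Integrable fun σ => f σ * |σ|)
include hf hmom

lemma integrable_posPart_sub_mul (x : ℝ) : Integrable fun σ => max 0 (x - σ) * f σ := by
  refine ((hf.norm.const_mul |x|).add hmom.norm).mono'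
    (((continuous_const.max (continuous_const.sub continuous_id)).aestronglyMeasurable).mul
      hf.aestronglyMeasurable) (Filter.Eventually.of_forall fun σ => ?_)
  have hmax : |max 0 (x - σ)| ≤ |x| + |σ| := by
    rw [abs_of_nonneg (le_max_left _ _)]
    exact max_le (by positivity) (by linarith [le_abs_self x, neg_abs_le σ])
  simp only [Pi.add_apply, norm_mul, Real.norm_eq_abs, abs_abs]
  nlinarith [abs_nonneg (f σ)]

theorem integral_Iic_integral_Iic_eq (x : ℝ) :
    ∫ τ in Iic x, ∫ σ in Iic τ, f σ = ∫ σ, max 0 (x - σ) * f σ := by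
  let F : ℝ × ℝ → ℝ := fun p => (Ici p.2).indicator (fun _ => f p.2) p.1
  have hF_eq : F = {p | p.2 ≤ p.1}.indicator fun p => f p.2 := by
    ext p
    simp [F, indicator_apply]
  have hF : Integrable F ((volume.restrict (Iic x)).prod volume) := by
    refine (integrable_prod_iff' (hF_eq ▸ (hf.aestronglyMeasurable.comp_snd).indicator
      (measurableSet_le measurable_snd measurable_fst))).2 ⟨?_, ?_⟩
    · refine Filter.Eventually.of_forall fun σ => ?_
      change Integrable ((Ici σ).indicator fun _ => f σ) _
      rw [integrable_indicator_iff measurableSet_Ici, integrableOn_const_iff,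
        Measure.restrict_apply measurableSet_Ici, Ici_inter_Iic, Real.volume_Icc]
      exact Or.inr ENNReal.ofReal_lt_top
    · refine (integrable_posPart_sub_mul hf.norm (by simpa [abs_mul] using hmom.norm) x).congr
        (Filter.Eventually.of_forall fun σ => ?_)
      simp only [F, ← integral_Iic_indicator_Ici_const, norm_indicator_eq_indicator_norm]
  calc ∫ τ in Iic x, ∫ σ in Iic τ, f σ
      = ∫ τ in Iic x, ∫ σ, F (τ, σ) := by
        refine setIntegral_congr_fun measurableSet_Iic fun τ _ => ?_
        rw [← integral_indicator measurableSet_Iic]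
        congr 1 with σ
    _ = ∫ σ, ∫ τ in Iic x, F (τ, σ) := integral_integral_swap hF
    _ = ∫ σ, max 0 (x - σ) * f σ := by
        simp only [F, integral_Iic_indicator_Ici_const]

end FirstMoment

lemma le_integral_posPart_sub_mul {f : ℝ → ℝ} (hf : Integrable f)
    (hmom : Integrable fun σ => f σ * |σ|) (hnn : ∀ σ, 0 ≤ f σ) (hone : ∫ σ, f σ = 1)
    (hmean : ∫ σ, f σ * σ ≤ 0) (x : ℝ) : max 0 x ≤ ∫ σ, max 0 (x - σ) * f σ := by
  have hmom' : Integrable fun σ => f σ * σ :=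
    hmom.congr' (hf.aestronglyMeasurable.mul continuous_id.aestronglyMeasurable)
      (Filter.Eventually.of_forall fun σ => by simp)
  have hsplit : (fun σ => (x - σ) * f σ) = fun σ => x * f σ - f σ * σ := by
    ext σ; ring
  have hlin : ∫ σ, (x - σ) * f σ = x - ∫ σ, f σ * σ := by
    rw [hsplit, integral_sub (hf.const_mul x) hmom', integral_const_mul, hone, mul_one]
  have hlin_int : Integrable fun σ => (x - σ) * f σ := hsplit ▸ (hf.const_mul x).sub hmom'
  refine max_le (integral_nonneg fun σ => mul_nonneg (le_max_left _ _) (hnn σ)) ?_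
  calc x ≤ ∫ σ, (x - σ) * f σ := by linarith
    _ ≤ ∫ σ, max 0 (x - σ) * f σ :=
      integral_mono hlin_int (integrable_posPart_sub_mul hf hmom x)
        fun σ => mul_le_mul_of_nonneg_right (le_max_right _ _) (hnn σ)

lemma integral_posPart_sub_mul_le {f : ℝ → ℝ} (hf : Integrable f) (hnn : ∀ σ, 0 ≤ f σ)
    (hone : ∫ σ, f σ = 1) (hsupp : ∀ σ < 0, f σ = 0) (x : ℝ) :
    ∫ σ, max 0 (x - σ) * f σ ≤ max 0 x := by
  calc ∫ σ, max 0 (x - σ) * f σ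
      ≤ ∫ σ, max 0 x * f σ := by
        refine integral_mono_of_nonneg (Filter.Eventually.of_forall fun σ =>
          mul_nonneg (le_max_left _ _) (hnn σ)) (hf.const_mul _)
          (Filter.Eventually.of_forall fun σ => ?_)
        rcases lt_or_ge σ 0 with hσ | hσ
        · simp [hsupp σ hσ]
        · exact mul_le_mul_of_nonneg_right (max_le_max le_rfl (by linarith)) (hnn σ)
    _ = max 0 x := by rw [integral_const_mul, hone, mul_one]

section Rescaling

variable {ζ : ℝ → ℝ} {δ : ℝ}

lemma integrable_rescale (hζ : Integrable ζ) (hδ : δ ≠ 0) :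
    Integrable fun σ => (1 / δ) * ζ (σ / δ) :=
  (hζ.comp_div hδ).const_mul _

lemma integrable_rescale_mul_abs (hmom : Integrable fun u => ζ u * |u|) (hδ : 0 < δ) :
    Integrable fun σ => (1 / δ) * ζ (σ / δ) * |σ| := by
  refine (hmom.comp_div hδ.ne').congr (Filter.Eventually.of_forall fun σ => ?_)
  simp only [abs_div, abs_of_pos hδ]
  ring

lemma integral_rescale (hδ : 0 < δ) : ∫ σ, (1 / δ) * ζ (σ / δ) = ∫ u, ζ u := by
  rw [integral_const_mul, Measure.integral_comp_div, smul_eq_mul, abs_of_pos hδ]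
  field_simp

lemma integral_rescale_mul (δ : ℝ) : ∫ σ, (1 / δ) * ζ (σ / δ) * σ = |δ| * ∫ u, ζ u * u := by
  rw [← smul_eq_mul, ← Measure.integral_comp_div (fun u => ζ u * u)]
  congr 1 with σ
  ring

end Rescaling

lemma eq_zero_of_neg_of_setIntegral_Iic_mul_abs_eq_zero {ζ : ℝ → ℝ} (hc : Continuous ζ)
    (hnn : ∀ u, 0 ≤ ζ u) (hmom : Integrable fun u => ζ u * |u|)
    (h0 : ∫ u in Iic 0, ζ u * |u| = 0) {t : ℝ} (ht : t < 0) : ζ t = 0 := by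
  have hae : (fun u => ζ u * |u|) =ᵐ[volume.restrict (Iic 0)] 0 :=
    (integral_eq_zero_iff_of_nonneg (fun u => mul_nonneg (hnn u) (abs_nonneg u))
      hmom.integrableOn).1 h0
  have hzero := Measure.eqOn_open_of_ae_eq (ae_restrict_of_ae_restrict_of_subset
    Iio_subset_Iic_self hae) isOpen_Iio (hc.mul continuous_abs).continuousOn continuousOn_const ht
  simpa [ht.ne] using hzero

theorem smoothPos_one_sided_general (ζ : ℝ → ℝ) (hc : Continuous ζ)
    (hnn : ∀ x, 0 ≤ ζ x)
    (hone : (∫ x, ζ x) = 1)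
    (hmom : Integrable (fun x => ζ x * |x|))
    (hsign : (∫ x, ζ x * x) ≤ 0 ∨ (∫ x in Set.Iic (0 : ℝ), ζ x * |x|) = 0)
    (δ : ℝ) (hδ : 0 < δ) :
    (∀ x : ℝ, smoothPos ζ δ x ≤ max 0 x) ∨ (∀ x : ℝ, max 0 x ≤ smoothPos ζ δ x) := by
  have hζ : Integrable ζ := .of_integral_ne_zero (by simp [hone])
  have hf := integrable_rescale hζ hδ.ne'
  have hfmom := integrable_rescale_mul_abs hmom hδ
  have hfnn : ∀ σ, 0 ≤ (1 / δ) * ζ (σ / δ) := fun σ => mul_nonneg (by positivity) (hnn _)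
  have hfone : ∫ σ, (1 / δ) * ζ (σ / δ) = 1 := (integral_rescale hδ).trans hone
  have hrep : ∀ x, smoothPos ζ δ x = ∫ σ, max 0 (x - σ) * ((1 / δ) * ζ (σ / δ)) :=
    integral_Iic_integral_Iic_eq hf hfmom
  simp only [hrep]
  rcases hsign with hmean | h0
  · refine Or.inr (le_integral_posPart_sub_mul hf hfmom hfnn hfone ?_)
    rw [integral_rescale_mul]
    exact mul_nonpos_of_nonneg_of_nonpos (abs_nonneg δ) hmean
  · refine Or.inl (integral_posPart_sub_mul_le hf hfnn hfone fun σ hσ => ?_)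
    rw [eq_zero_of_neg_of_setIntegral_Iic_mul_abs_eq_zero hc hnn hmom h0
      (div_neg_of_neg_of_pos hσ hδ), mul_zero]

/-- Under the sign assumption on `ζ`, for each `δ > 0` the smoothed positive part lies
entirely below or entirely above the positive part. -/
theorem smoothPos_one_sided (ζ : ℝ → ℝ) (hc : Continuous ζ)
    (hb : ∃ M, ∀ x, ζ x ≤ M) (hnn : ∀ x, 0 ≤ ζ x)
    (hone : (∫ x, ζ x) = 1)
    (hmom : Integrable (fun x => ζ x * |x|))
    (hsign : (∫ x, ζ x * x) ≤ 0 ∨ (∫ x in Set.Iic (0 : ℝ), ζ x * |x|) = 0)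
    (δ : ℝ) (hδ : 0 < δ) :
    (∀ x : ℝ, smoothPos ζ δ x ≤ max 0 x) ∨ (∀ x : ℝ, max 0 x ≤ smoothPos ζ δ x) :=
  smoothPos_one_sided_general ζ hc hnn hone hmom hsign δ hδ
end
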